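/- arXiv:2009.04510 — 3 statements merged into one kernel-verified Lean document; each statement's English description precedes it below -/
import Mathlib

section
/- For all integers n ≥ 2, L ≥ 2 and d ≥ 2, the polynomial p_d is convex on the standard simplex Δ_m; equivalently, its Hessian matrix H(p_d)(x) = (∂²p_d(x)/∂x_e ∂x_f)_{e,f ∈ E} is positive semidefinite at every point x ∈ Δ_m. -/
/-!
With the weights `w(r) = 1 / (n * C(n-1, r))`, every nonempty `S ⊆ [n]` satisfies
`1 / |S| = ∑_{R ∩ S = ∅} w(|R|)`, by the binomial identity
`∑_{r ≤ j} C(j, r) / C(j + k, r) = (j + k + 1) / (k + 1)`.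
Substituting this for `1 / |e_1 ∪ ⋯ ∪ e_d|` and exchanging the sums gives
`p_d(x) = ∑_R w(|R|) (∑_{e ∩ R = ∅} x_e)^d`, a nonnegative combination of `d`-th powers of
linear forms that are nonnegative on the nonnegative orthant, hence convex there.
-/

open Finset

/-- The set of edges of the complete `L`-uniform hypergraph on `n` vertices. -/
abbrev Edge (n L : ℕ) := {e : Finset (Fin n) // e.card = L}

/-- The polynomial `p_d(x) = ∑_{(e_1,…,e_d) ∈ E^d} (1/|e_1 ∪ ⋯ ∪ e_d|) x_{e_1} ⋯ x_{e_d}`. -/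
noncomputable def pPoly (n L d : ℕ) (x : Edge n L → ℝ) : ℝ :=
  ∑ t : Fin d → Edge n L,
    ((Finset.univ.biUnion fun i => (t i).1).card : ℝ)⁻¹ * ∏ i, x (t i)

theorem choose_mul_choose_add_sub_eq (j k r : ℕ) (hr : r ≤ j) :
    j.choose r * (j + k).choose j = (j + k - r).choose k * (j + k).choose r := by
  rw [mul_comm, Nat.choose_mul hr, mul_comm,
    Nat.choose_symm_of_eq_add (show j + k - r = (j - r) + k by omega)]

theorem sum_range_choose_div_choose_add (j k : ℕ) :
    ∑ r ∈ range (j + 1), (j.choose r : ℝ) / (j + k).choose r = (j + k + 1) / (k + 1) := by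
  have hpos : ∀ r ∈ range (j + 1), (0 : ℝ) < (j + k).choose r := fun r hr =>
    Nat.cast_pos.mpr (Nat.choose_pos (by simp at hr; omega))
  have hterm : ∀ r ∈ range (j + 1), (j.choose r : ℝ) / (j + k).choose r
      = (j + k - r).choose k / (j + k).choose j := by
    intro r hr
    rw [div_eq_div_iff (hpos r hr).ne' (hpos j (self_mem_range_succ j)).ne']
    exact_mod_cast choose_mul_choose_add_sub_eq j k r (by simp at hr; omega)
  have hhockey : ∑ r ∈ range (j + 1), (j + k - r).choose k = (j + k + 1).choose (k + 1) := by
    rw [← Nat.sum_range_add_choose, ← sum_range_reflect]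
    refine sum_congr rfl fun i hi => ?_
    congr 1
    simp at hi
    omega
  have hsucc : ((j + k + 1).choose (k + 1) : ℝ) * (k + 1) = (j + k + 1) * (j + k).choose j := by
    rw [Nat.choose_symm_add]
    exact_mod_cast (Nat.add_one_mul_choose_eq (j + k) k).symm
  rw [sum_congr rfl hterm, ← sum_div,
    div_eq_div_iff (hpos j (self_mem_range_succ j)).ne' (by positivity)]
  exact_mod_cast hhockey ▸ hsucc

/-- This is `r! (n - 1 - r)! / n!`: for `R` disjoint from `S` with `#R = r` and a fixed `s ∈ S`,
the probability that a random ordering of the `n`-set starts with `R` followed by `s`. Summed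
over `R`, it is the probability `1 / #S` that `s` comes first among `S`. -/
noncomputable def subsetWeight (n r : ℕ) : ℝ := ((n : ℝ) * (n - 1).choose r)⁻¹

theorem sum_subsetWeight_disjoint {α : Type*} [Fintype α] [DecidableEq α] {S : Finset α}
    (hS : S.Nonempty) :
    ∑ R with Disjoint R S, subsetWeight (Fintype.card α) #R = (#S : ℝ)⁻¹ := by
  obtain ⟨k, hk⟩ : ∃ k, #S = k + 1 := Nat.exists_eq_add_one.mpr hS.card_pos
  have hcard : Fintype.card α = #Sᶜ + k + 1 := by rw [← card_compl_add_card S, hk, add_assoc]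
  have hfilter : ({R | Disjoint R S} : Finset (Finset α)) = Sᶜ.powerset := by
    ext R
    simp [subset_compl_iff_disjoint_right]
  have hterm : ∀ r, ((#Sᶜ).choose r • subsetWeight (#Sᶜ + k + 1) r : ℝ)
      = (#Sᶜ + k + 1 : ℝ)⁻¹ * (((#Sᶜ).choose r : ℝ) / (#Sᶜ + k).choose r) := by
    intro r
    simp only [subsetWeight, nsmul_eq_mul, Nat.add_sub_cancel, mul_inv, div_eq_mul_inv]
    push_cast
    ring
  rw [hfilter, sum_powerset_apply_card, hk, hcard, sum_congr rfl fun r _ => hterm r, ← mul_sum,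
    sum_range_choose_div_choose_add]
  push_cast
  field_simp

theorem pPoly_eq_sum_subsetWeight_mul_pow {n L d : ℕ} (hL : 0 < L) (hd : 0 < d)
    (x : Edge n L → ℝ) :
    pPoly n L d x = ∑ R : Finset (Fin n),
      subsetWeight n #R * (∑ e : Edge n L with Disjoint R e.1, x e) ^ d := by
  have hunion : ∀ t : Fin d → Edge n L, (univ.biUnion fun i => (t i).1).Nonempty := fun t =>
    (card_pos.mp ((t ⟨0, hd⟩).2 ▸ hL)).mono (subset_biUnion_of_mem _ (mem_univ _))
  have hinv : ∀ t : Fin d → Edge n L, ((univ.biUnion fun i => (t i).1).card : ℝ)⁻¹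
      = ∑ R : Finset (Fin n), if ∀ i, Disjoint R (t i).1 then subsetWeight n #R else 0 := by
    intro t
    rw [← sum_subsetWeight_disjoint (hunion t), Fintype.card_fin, sum_filter]
    simp only [disjoint_biUnion_right, mem_univ, true_implies]
  simp_rw [pPoly, hinv, sum_mul, ite_mul, zero_mul]
  rw [sum_comm]
  refine sum_congr rfl fun R _ => ?_
  rw [sum_filter, Fintype.sum_pow, mul_sum]
  refine sum_congr rfl fun t _ => ?_
  rw [Fintype.prod_ite_zero, mul_ite, mul_zero]
  congr

theorem ConvexOn.sum {𝕜 E β ι : Type*} [Semiring 𝕜] [PartialOrder 𝕜] [AddCommMonoid E]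
    [AddCommMonoid β] [PartialOrder β] [IsOrderedAddMonoid β] [Module 𝕜 E] [Module 𝕜 β]
    {s : Set E} (hs : Convex 𝕜 s) (t : Finset ι) {f : ι → E → β}
    (hf : ∀ i ∈ t, ConvexOn 𝕜 s (f i)) : ConvexOn 𝕜 s fun x => ∑ i ∈ t, f i x := by
  classical
  induction t using Finset.induction_on with
  | empty => simpa using convexOn_const 0 hs
  | insert a t ha ih =>
    simp_rw [sum_insert ha]
    exact (hf a (mem_insert_self a t)).add (ih fun i hi => hf i (mem_insert_of_mem hi))

theorem convexOn_sum_pow {ι : Type*} (t : Finset ι) (d : ℕ) :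
    ConvexOn ℝ (Set.Ici 0) fun x : ι → ℝ => (∑ i ∈ t, x i) ^ d := by
  let ℓ : (ι → ℝ) →ₗ[ℝ] ℝ := ∑ i ∈ t, LinearMap.proj i
  have hℓ : ∀ x, ℓ x = ∑ i ∈ t, x i := fun x => by simp [ℓ]
  refine (((convexOn_pow d).comp_linearMap ℓ).subset (fun x hx => ?_) (convex_Ici 0)).congr
    fun x _ => by simp [hℓ]
  simpa [hℓ] using sum_nonneg fun i _ => hx i

theorem convexOn_pPoly {n L d : ℕ} (hL : 0 < L) (hd : 0 < d) :
    ConvexOn ℝ (Set.Ici 0) (pPoly n L d) := by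
  have hsum := ConvexOn.sum (convex_Ici 0) univ fun R (_ : R ∈ univ) =>
    (convexOn_sum_pow {e : Edge n L | Disjoint R e.1} d).smul
      (by unfold subsetWeight; positivity : 0 ≤ subsetWeight n #R)
  exact hsum.congr fun x _ => (pPoly_eq_sum_subsetWeight_mul_pow hL hd x).symm

theorem stmt1_general (n L d : ℕ) (hL : 2 ≤ L) (hd : 2 ≤ d) :
    ConvexOn ℝ (stdSimplex ℝ (Edge n L)) (pPoly n L d) :=
  (convexOn_pPoly (by omega) (by omega)).subset (fun _ hx => hx.1) (convex_stdSimplex ℝ _)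

/-- `p_d` is convex on the standard simplex. -/
theorem stmt1 (n L d : ℕ) (hn : 2 ≤ n) (hL : 2 ≤ L) (hd : 2 ≤ d) :
    ConvexOn ℝ (stdSimplex ℝ (Edge n L)) (pPoly n L d) :=
  stmt1_general n L d hL hd
end

section
/- For every k with 0 ≤ k ≤ ⌊N/2⌋, the symmetric matrix B_k = ( a(i) a(j) Σ_{t=0}^{min(i,j)} β^t_{i,j,k} · (1/(p+i+j−t)) )_{i,j=k}^{N−k} is positive semidefinite. -/
open Finset

/-- `a(i) := C(N−2k, i−k)^{−1/2}`. -/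
noncomputable def aA (N k i : ℕ) : ℝ :=
  (((N - 2 * k).choose (i - k) : ℝ)) ^ (-(1/2 : ℝ))

/-- `b(u,i) := C(N−k−u, i−u)`, with the convention that it is `0` when `i − u < 0`
(negative lower index). -/
noncomputable def bB (N k u i : ℕ) : ℝ :=
  if u ≤ i then ((N - k - u).choose (i - u) : ℝ) else 0

/-- `c(u) := C(N−2k, N−k−u)`, with the convention that it is `0` when `N − k − u < 0`
(negative lower index). -/
noncomputable def cC (N k u : ℕ) : ℝ :=
  if u ≤ N - k then ((N - 2 * k).choose (N - k - u) : ℝ) else 0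

/-- `β^t_{i,j,k} := ∑_{u=0}^{N} (−1)^{u−t} C(u,t) c(u) b(u,i) b(u,j)`. -/
noncomputable def betaCoef (N k i j t : ℕ) : ℝ :=
  ∑ u ∈ Finset.range (N + 1),
    (-1 : ℝ) ^ (u - t) * (u.choose t : ℝ) * cC N k u * bB N k u i * bB N k u j

/-!
Since `1/n = ∫₀¹ x^(n-1) dx`, each entry of `B_k` is the integral over `[0,1]` of the
polynomial `∑_t β^t x^(p+i+j-t-1)`. Expanding `β^t` and summing over `t` first, the binomial
theorem collapses the alternating sum to `x^(p+i+j-1-u) (1-x)^u`, so the integrand becomes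
`∑_u c(u) x^(p-1+u) (1-x)^u · v_u(x)_i v_u(x)_j` with `v_u(x)_i = a(i) b(u,i) x^(i-u)`.
For `x ∈ [0,1]` this is a nonnegative combination of rank-one matrices `v vᵀ`, and integrating
positive semidefinite matrices keeps them positive semidefinite.
-/

open MeasureTheory

namespace Matrix

theorem posSemidef_of_forall_ae_posSemidef {α n : Type*} [MeasurableSpace α] [Fintype n]
    {μ : Measure α} {F : α → Matrix n n ℝ} (hint : ∀ i j, Integrable (fun x => F x i j) μ)
    (hF : ∀ᵐ x ∂μ, (F x).PosSemidef) :
    (of fun i j => ∫ x, F x i j ∂μ).PosSemidef := by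
  refine .of_dotProduct_mulVec_nonneg ?_ fun y => ?_
  · ext i j
    simp only [conjTranspose_apply, of_apply, star_trivial]
    exact integral_congr_ae (hF.mono fun x hx => by simpa using congr_fun₂ hx.1 i j)
  · have hquad : star y ⬝ᵥ (of (fun i j => ∫ x, F x i j ∂μ) *ᵥ y)
        = ∫ x, star y ⬝ᵥ (F x *ᵥ y) ∂μ := by
      simp only [dotProduct, mulVec, of_apply, star_trivial, Finset.mul_sum]
      rw [integral_finsetSum _ fun i _ => integrable_finsetSum _ fun j _ =>
        ((hint i j).mul_const _).const_mul _]
      refine Finset.sum_congr rfl fun i _ => ?_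
      rw [integral_finsetSum _ fun j _ => ((hint i j).mul_const _).const_mul _]
      refine Finset.sum_congr rfl fun j _ => ?_
      rw [integral_const_mul, integral_mul_const]
    rw [hquad]
    exact integral_nonneg_of_ae (hF.mono fun x hx => hx.dotProduct_mulVec_nonneg y)

theorem posSemidef_of_sum_mul_mul {ι n : Type*} [Fintype n] (s : Finset ι) {w : ι → ℝ}
    (v : ι → n → ℝ) (hw : ∀ u ∈ s, 0 ≤ w u) :
    (of fun i j => ∑ u ∈ s, w u * v u i * v u j).PosSemidef := by
  have hsum : of (fun i j => ∑ u ∈ s, w u * v u i * v u j)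
      = ∑ u ∈ s, w u • vecMulVec (v u) (star (v u)) := by
    ext i j
    simp [sum_apply, vecMulVec_apply, mul_assoc]
  rw [hsum]
  exact posSemidef_sum s fun u hu => (posSemidef_vecMulVec_self_star _).smul (hw u hu)

end Matrix

theorem sum_range_neg_one_pow_mul_choose_mul_pow (x : ℝ) {u M m : ℕ} (hu : u ≤ M)
    (hM : M ≤ m) :
    ∑ t ∈ range (M + 1), (-1 : ℝ) ^ (u - t) * u.choose t * x ^ (m - t)
      = x ^ (m - u) * (1 - x) ^ u := by
  rw [sub_pow, mul_sum, ← sum_subset (range_subset_range.mpr (by omega : u + 1 ≤ M + 1))]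
  · refine sum_congr rfl fun t ht => ?_
    have htu : t ≤ u := Nat.lt_succ_iff.mp (mem_range.mp ht)
    rw [show t + u = (u - t) + 2 * t by omega, show m - t = (m - u) + (u - t) by omega,
      pow_add, pow_add, pow_mul]
    ring
  · intro t _ ht
    simp [Nat.choose_eq_zero_of_lt (by simpa using ht : u < t)]

section

variable {N k : ℕ}

theorem bB_eq_zero_of_lt {u i : ℕ} (h : i < u) : bB N k u i = 0 :=
  if_neg (by omega)

theorem cC_nonneg (u : ℕ) : 0 ≤ cC N k u := by
  unfold cC
  split_ifs <;> positivity

variable (N k)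

theorem sum_betaCoef_mul_pow {i j m : ℕ} (h : min i j ≤ m) (x : ℝ) :
    ∑ t ∈ range (min i j + 1), betaCoef N k i j t * x ^ (m - t)
      = ∑ u ∈ range (N + 1), cC N k u * bB N k u i * bB N k u j * (x ^ (m - u) * (1 - x) ^ u) := by
  simp only [betaCoef, sum_mul]
  rw [sum_comm]
  refine sum_congr rfl fun u _ => ?_
  by_cases hu : u ≤ min i j
  · rw [← sum_range_neg_one_pow_mul_choose_mul_pow x hu h, mul_sum]
    exact sum_congr rfl fun t _ => by ring
  · rcases lt_or_ge i u with hi | hi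
    · simp [bB_eq_zero_of_lt hi]
    · simp [bB_eq_zero_of_lt (by omega : j < u)]

end

theorem sum_mul_inv_natCast_eq_integral {ι : Type*} (s : Finset ι) (c : ι → ℝ) {n : ι → ℕ}
    (hn : ∀ t ∈ s, 1 ≤ n t) :
    ∑ t ∈ s, c t * (n t : ℝ)⁻¹ = ∫ x in (0 : ℝ)..1, ∑ t ∈ s, c t * x ^ (n t - 1) := by
  rw [intervalIntegral.integral_finsetSum fun t _ => by
    exact (continuous_const.mul (continuous_pow _)).intervalIntegrable _ _]
  refine sum_congr rfl fun t ht => ?_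
  rw [intervalIntegral.integral_const_mul, integral_pow, Nat.sub_add_cancel (hn t ht)]
  simp [zero_pow (by have := hn t ht; omega : n t ≠ 0), Nat.cast_sub (hn t ht)]

theorem aA_mul_aA_mul_sum_betaCoef_eq_integral (N k : ℕ) {p : ℕ} (hp : 1 ≤ p) (i j : ℕ) :
    aA N k i * aA N k j *
        ∑ t ∈ range (min i j + 1), betaCoef N k i j t * ((p + i + j - t : ℕ) : ℝ)⁻¹
      = ∫ x in (0 : ℝ)..1, ∑ u ∈ range (N + 1),
          cC N k u * x ^ (p - 1 + u) * (1 - x) ^ u *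
            (aA N k i * bB N k u i * x ^ (i - u)) * (aA N k j * bB N k u j * x ^ (j - u)) := by
  rw [sum_mul_inv_natCast_eq_integral _ _ fun t ht => by simp at ht; omega,
    ← intervalIntegral.integral_const_mul]
  refine intervalIntegral.integral_congr fun x _ => ?_
  simp only [Nat.sub_right_comm _ _ 1]
  rw [sum_betaCoef_mul_pow N k (by omega) x, mul_sum]
  refine sum_congr rfl fun u _ => ?_
  by_cases hi : u ≤ i
  · by_cases hj : u ≤ j
    · rw [show p + i + j - 1 - u = (p - 1 + u) + (i - u) + (j - u) by omega, pow_add, pow_add]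
      ring
    · simp [bB_eq_zero_of_lt (by omega : j < u)]
  · simp [bB_eq_zero_of_lt (by omega : i < u)]

theorem stmt11_general (p N k : ℕ) (hp : 1 ≤ p) :
    (Matrix.of fun i' j' : Fin (N - 2 * k + 1) =>
      aA N k (k + i'.1) * aA N k (k + j'.1) *
        ∑ t ∈ Finset.range (min (k + i'.1) (k + j'.1) + 1),
          betaCoef N k (k + i'.1) (k + j'.1) t *
            ((p + (k + i'.1) + (k + j'.1) - t : ℕ) : ℝ)⁻¹).PosSemidef := by
  simp_rw [aA_mul_aA_mul_sum_betaCoef_eq_integral N k hp, intervalIntegral.integral_of_le zero_le_one]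
  refine Matrix.posSemidef_of_forall_ae_posSemidef (fun a b => ?_)
    (ae_restrict_of_forall_mem measurableSet_Ioc fun x hx => ?_)
  · exact Continuous.integrableOn_Ioc (by fun_prop)
  · show (Matrix.of fun a b : Fin (N - 2 * k + 1) => _).PosSemidef
    refine Matrix.posSemidef_of_sum_mul_mul (range (N + 1)) _ fun u _ => ?_
    exact mul_nonneg (mul_nonneg (cC_nonneg u) (pow_nonneg hx.1.le _))
      (pow_nonneg (sub_nonneg.2 hx.2) _)

/-- The matrix `B_k = (a(i)a(j) ∑_{t=0}^{min(i,j)} β^t_{i,j,k}/(p+i+j−t))_{i,j=k}^{N−k}`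
is positive semidefinite. (Indices `i = k + i'`, `j = k + j'` with `i', j'` ranging over
`{0,…,N−2k}`.) -/
theorem stmt11 (p N k : ℕ) (hp : 1 ≤ p) (hk : k ≤ N / 2) :
    (Matrix.of fun i' j' : Fin (N - 2 * k + 1) =>
      aA N k (k + i'.1) * aA N k (k + j'.1) *
        ∑ t ∈ Finset.range (min (k + i'.1) (k + j'.1) + 1),
          betaCoef N k (k + i'.1) (k + j'.1) t *
            ((p + (k + i'.1) + (k + j'.1) - t : ℕ) : ℝ)⁻¹).PosSemidef :=
  stmt11_general p N k hp
end

section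
/- For L = 2, n ≥ 2 and a fixed edge e₁ ∈ E, the symmetric E×E matrix B with entries B_{e,f} = 1/|e ∪ f| + 1/|e₁ ∪ e| + 1/|e₁ ∪ f| is positive semidefinite. -/
open Finset

/-- The edge set of the complete graph on `n` vertices (2-element subsets). -/
abbrev Edge2 (n : ℕ) := {e : Finset (Fin n) // e.card = 2}

/-- The matrix `B` with entries `B_{e,f} = 1/|e ∪ f| + 1/|e₁ ∪ e| + 1/|e₁ ∪ f|`. -/
noncomputable def Bmat (n : ℕ) (e₁ : Edge2 n) : Matrix (Edge2 n) (Edge2 n) ℝ :=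
  Matrix.of fun e f =>
    ((e.1 ∪ f.1).card : ℝ)⁻¹ + ((e₁.1 ∪ e.1).card : ℝ)⁻¹ + ((e₁.1 ∪ f.1).card : ℝ)⁻¹

/-!
For 2-sets `e, f` one has `1/|e ∪ f| = (δ_{ef} + 3 + |e ∩ f|)/12`, so `12 B` is linear in
`δ_{ef}` and the incidences `|e ∩ f| = ∑_v [v ∈ e][v ∈ f]`. Writing `u` for the indicator of `e₁`,
`𝟙` for the all-ones vector and `y_v = [v ∈ ·] + [v ∈ e₁] 𝟙`, this gives the Gram decomposition
`12 B = (I - u uᵀ) + (u + 𝟙)(u + 𝟙)ᵀ + ∑_v y_v y_vᵀ + 6 𝟙𝟙ᵀ`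
into positive semidefinite summands.
-/

open Matrix

theorem Finset.inv_card_union_of_card_eq_two {α : Type*} [DecidableEq α] {s t : Finset α}
    (hs : #s = 2) (ht : #t = 2) :
    (#(s ∪ t) : ℝ)⁻¹ = ((if s = t then 1 else 0) + 3 + #(s ∩ t)) / 12 := by
  by_cases hst : s = t
  · subst hst
    norm_num [hs]
  · have hlt : #(s ∩ t) < 2 := by
      refine lt_of_le_of_ne (hs ▸ card_le_card inter_subset_left) fun h => hst ?_
      rw [← eq_of_subset_of_card_le (inter_subset_left (s₁ := s) (s₂ := t)) (by omega),
        eq_of_subset_of_card_le inter_subset_right (by omega)]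
    have hsum := card_union_add_card_inter s t
    rw [if_neg hst]
    interval_cases h : #(s ∩ t) <;> rw [show #(s ∪ t) = 4 - #(s ∩ t) by omega, h] <;> norm_num

theorem Finset.sum_boole_mul_boole {α R : Type*} [Fintype α] [DecidableEq α] [CommSemiring R]
    (s t : Finset α) :
    ∑ v, (if v ∈ s then (1 : R) else 0) * (if v ∈ t then 1 else 0) = #(s ∩ t) := by
  simp [inter_comm]

theorem Finset.sum_boole_add_mul_boole_add {α R : Type*} [Fintype α] [DecidableEq α]
    [CommSemiring R] (r s t : Finset α) :
    ∑ v, ((if v ∈ s then (1 : R) else 0) + (if v ∈ r then 1 else 0)) *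
        ((if v ∈ t then 1 else 0) + (if v ∈ r then 1 else 0)) =
      #(s ∩ t) + #(r ∩ s) + #(r ∩ t) + #r := by
  simp only [add_mul, mul_add, sum_add_distrib, sum_boole_mul_boole, inter_self]
  rw [inter_comm s r]
  ring

theorem Matrix.posSemidef_vecMulVec_self {ι R : Type*} [Finite ι] [CommRing R] [PartialOrder R]
    [StarRing R] [StarOrderedRing R] [TrivialStar R] (a : ι → R) :
    (vecMulVec a a).PosSemidef := by
  simpa using posSemidef_vecMulVec_self_star a

def shiftedIncidence {n : ℕ} (e₁ : Edge2 n) (v : Fin n) : Edge2 n → ℝ :=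
  fun e => (if v ∈ e.1 then 1 else 0) + (if v ∈ e₁.1 then 1 else 0)

theorem Bmat_eq_smul_sum_vecMulVec (n : ℕ) (e₁ : Edge2 n) :
    Bmat n e₁ = (12 : ℝ)⁻¹ • (diagonal (fun e => if e = e₁ then 0 else 1) +
      vecMulVec (Pi.single e₁ 1 + 1) (Pi.single e₁ 1 + 1) +
      ∑ v, vecMulVec (shiftedIncidence e₁ v) (shiftedIncidence e₁ v) +
      (6 : ℝ) • vecMulVec 1 1) := by
  ext e f
  simp only [Bmat, shiftedIncidence, of_apply, Matrix.smul_apply, Matrix.add_apply,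
    diagonal_apply, vecMulVec_apply, Matrix.sum_apply, sum_boole_add_mul_boole_add, Pi.add_apply,
    Pi.single_apply, Pi.one_apply, smul_eq_mul]
  rw [inv_card_union_of_card_eq_two e.2 f.2, inv_card_union_of_card_eq_two e₁.2 e.2,
    inv_card_union_of_card_eq_two e₁.2 f.2, e₁.2]
  split_ifs <;> simp_all [Subtype.ext_iff] <;> ring

theorem stmt19_general (n : ℕ) (e₁ : Edge2 n) :
    (Bmat n e₁).PosSemidef := by
  rw [Bmat_eq_smul_sum_vecMulVec]
  refine PosSemidef.smul ?_ (by norm_num)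
  have hdiag : PosSemidef (diagonal fun e : Edge2 n => if e = e₁ then (0 : ℝ) else 1) :=
    PosSemidef.diagonal fun e => by positivity
  exact ((hdiag.add (posSemidef_vecMulVec_self _)).add
    (posSemidef_sum _ fun v _ => posSemidef_vecMulVec_self _)).add
    ((posSemidef_vecMulVec_self _).smul (by norm_num))

/-- For `L = 2`, the matrix `B` is positive semidefinite. -/
theorem stmt19 (n : ℕ) (hn : 2 ≤ n) (e₁ : Edge2 n) :
    (Bmat n e₁).PosSemidef :=
  stmt19_general n e₁
end
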